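/- Let n ≥ 18 and D = {i : 1 ≤ i ≤ 2^{n+1} − 3, i odd}. Let U be an irreducible solution of length ℓ and weight w ≥ 2 for D whose density lies in [1/n, 1/(n−1)], so that its support φ_U has exactly w jumps. Write φ_U, up to a cyclic shift of its argument, as the concatenation of w geometric runs: the sequence of values φ_U(0),…,φ_U(ℓ−1) equals n_1, 2n_1, …, 2^{ℓ_1−1}n_1, n_2, 2n_2, …, 2^{ℓ_2−1}n_2, …, n_w, …, 2^{ℓ_w−1}n_w, where ℓ_1 + ⋯ + ℓ_w = ℓ and n_{k+1} < 2^{ℓ_k} n_k for each k (indices mod w). Then: (i) ℓ_k ≤ n + 1 for all 1 ≤ k ≤ w; (ii) every n_k is odd; (iii) if n_k > 2^u for some integer u ≥ 1, then ℓ_k ≤ n − u; (iv) if ℓ_i ≥ n for some i, then n_i = 1 and ℓ_j ≤ n − 1 for all j ≠ i; moreover there is at most one index j with ℓ_j = n − 1, and for such j one has n_j = 3. -/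

import Mathlib

/-- The binary weight `s₂(m)`: the sum of the base-2 digits of `m`. -/
def s2 (m : ℕ) : ℕ := (Nat.digits 2 m).sum

/-- The shift map on `{0, …, 2^ℓ - 1}`: it fixes `2^ℓ - 1` and sends any other `i`
to the remainder of `2·i` modulo `2^ℓ - 1`. -/
def shift2 (ℓ i : ℕ) : ℕ := if i = 2 ^ ℓ - 1 then i else (2 * i) % (2 ^ ℓ - 1)

/-- `U : ℕ → ℕ` (supported on `D`) is a solution of length `ℓ` for `D`:
`0 ≤ u_d ≤ 2^ℓ - 1` and `∑ d·u_d` is a positive multiple of `2^ℓ - 1`. -/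
structure IsSolution (D : Finset ℕ) (ℓ : ℕ) (U : ℕ → ℕ) : Prop where
  len_pos : 1 ≤ ℓ
  bounded : ∀ d, U d ≤ 2 ^ ℓ - 1
  supp_sub : ∀ d, d ∉ D → U d = 0
  dvd : (2 ^ ℓ - 1) ∣ ∑ d ∈ D, d * U d
  pos : 0 < ∑ d ∈ D, d * U d

/-- The weight `s(U) = ∑_{d ∈ D} s₂(u_d)` of a solution. -/
def weight (D : Finset ℕ) (U : ℕ → ℕ) : ℕ := ∑ d ∈ D, s2 (U d)

/-- The support map `φ_U(k) = (∑_{d ∈ D} d·δ^k(u_d)) / (2^ℓ - 1)` of a solution,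
viewed as an `ℓ`-periodic function on `ℕ`. -/
def supportMap (D : Finset ℕ) (ℓ : ℕ) (U : ℕ → ℕ) (k : ℕ) : ℕ :=
  (∑ d ∈ D, d * (shift2 ℓ)^[k] (U d)) / (2 ^ ℓ - 1)

/-- A solution is irreducible when its support map is injective on `ℤ/ℓℤ`,
i.e. injective on `{0, …, ℓ-1}`. -/
def IrreducibleSol (D : Finset ℕ) (ℓ : ℕ) (U : ℕ → ℕ) : Prop :=
  Set.InjOn (supportMap D ℓ U) ↑(Finset.range ℓ)

/-- `U` is a shift of `V` (coordinatewise iterate of the shift map). -/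
def IsShiftOf (ℓ : ℕ) (U V : ℕ → ℕ) : Prop :=
  ∃ k, ∀ d, U d = (shift2 ℓ)^[k] (V d)

/-- The set of odd integers `1 ≤ i ≤ d`. -/
def oddUpTo (d : ℕ) : Finset ℕ := (Finset.range (d + 1)).filter (fun i => i % 2 = 1)

/-- `D = {i : 1 ≤ i ≤ 2^{n+1} - 3, i odd}`. -/
def oddD (n : ℕ) : Finset ℕ := oddUpTo (2 ^ (n + 1) - 3)

/-- The solution with `u_a = 1` and all other coordinates `0`. -/
def sol1 (a : ℕ) : ℕ → ℕ := fun d => if d = a then 1 else 0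

/-- The solution with `u_a = x`, `u_b = y` and all other coordinates `0`. -/
def sol2 (a x b y : ℕ) : ℕ → ℕ := fun d => if d = a then x else if d = b then y else 0

/-- The solution with `u_a = x`, `u_b = y`, `u_c = z` and all other coordinates `0`. -/
def sol3 (a x b y c z : ℕ) : ℕ → ℕ :=
  fun d => if d = a then x else if d = b then y else if d = c then z else 0

/-!
Doubling the support on `ℓ` bits loses exactly the `d ∈ D` whose coordinate carries out of the
top bit: `φ (k + 1) = 2 φ k - ∑ d`. Over one period the carries of `u_d` are its binary digits,
so there are `s(U) = w` carries in all. Each of the `w` jumps needs one, hence each jump is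
`2 ^ ℓ_k n_k - n_(k+1) = d_k` for a single odd `d_k < 2 ^ (n + 1)`. So the `n_k` are odd, every
run maximum is below `2 ^ (n + 1)`, i.e. `ℓ_k + log₂ n_k ≤ n + 1`, and the density bound gives
`∑ log₂ n_k ≤ 2 w`. The `n_k` being distinct odd numbers, `∑ log₂ n_k ≥ 3 w - 7`, whence
`∑ log₂ n_k ≤ 14`; but a run with `ℓ_k = n + 1 - u` and `n_k > 2 ^ u` would force
`log₂ n_k + log₂ n_(k+1) ≥ n + 1`.
-/

open Finset

lemma s2_add_two_mul {b : ℕ} (hb : b < 2) (m : ℕ) : s2 (b + 2 * m) = b + s2 m := by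
  rcases Nat.eq_zero_or_pos b with rfl | hb0
  · rcases Nat.eq_zero_or_pos m with rfl | hm
    · rfl
    · simp only [s2, Nat.digits_add 2 one_lt_two 0 m two_pos (Or.inr hm.ne'), List.sum_cons]
  · simp only [s2, Nat.digits_add 2 one_lt_two b m hb (Or.inl hb0.ne'), List.sum_cons]

def carry (ℓ v : ℕ) : ℕ := if 2 ^ (ℓ - 1) ≤ v then 1 else 0

lemma carry_lt_two (ℓ v : ℕ) : carry ℓ v < 2 := by
  unfold carry; split <;> omega

lemma two_pow_mul_eq_add_mul (ℓ v : ℕ) : 2 ^ ℓ * v = v + (2 ^ ℓ - 1) * v := by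
  rw [Nat.sub_mul, one_mul, Nat.add_sub_cancel' (Nat.le_mul_of_pos_left v Nat.one_le_two_pow)]

section shift

variable {ℓ v : ℕ}

lemma shift2_add_carry (hℓ : 1 ≤ ℓ) (hv : v ≤ 2 ^ ℓ - 1) :
    shift2 ℓ v + (2 ^ ℓ - 1) * carry ℓ v = 2 * v := by
  have : 2 * 2 ^ (ℓ - 1) = 2 ^ ℓ := by rw [← pow_succ', Nat.sub_add_cancel hℓ]
  unfold shift2 carry
  by_cases htop : v = 2 ^ ℓ - 1
  · rw [if_pos htop, if_pos (by omega)]; omega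
  by_cases hc : 2 ^ (ℓ - 1) ≤ v
  · rw [if_neg htop, if_pos hc, Nat.mod_eq_sub_mod (by omega), Nat.mod_eq_of_lt (by omega)]
    omega
  · rw [if_neg htop, if_neg hc, Nat.mod_eq_of_lt (by omega)]; omega

lemma mapsTo_shift2_Iic : Set.MapsTo (shift2 ℓ) (Set.Iic (2 ^ ℓ - 1)) (Set.Iic (2 ^ ℓ - 1)) := by
  intro v (hv : v ≤ _)
  unfold shift2
  split
  · exact hv
  · exact (Nat.mod_lt _ (by omega)).le

lemma mapsTo_shift2_Iio : Set.MapsTo (shift2 ℓ) (Set.Iio (2 ^ ℓ - 1)) (Set.Iio (2 ^ ℓ - 1)) := by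
  intro v (hv : v < _)
  rw [Set.mem_Iio, shift2, if_neg hv.ne]
  exact Nat.mod_lt _ (by omega)

def carryDigits (ℓ v : ℕ) : ℕ → ℕ
  | 0 => 0
  | k + 1 => carry ℓ ((shift2 ℓ)^[k] v) + 2 * carryDigits ℓ v k

lemma s2_carryDigits (k : ℕ) :
    s2 (carryDigits ℓ v k) = ∑ i ∈ range k, carry ℓ ((shift2 ℓ)^[i] v) := by
  induction k with
  | zero => rfl
  | succ k ih => rw [carryDigits, s2_add_two_mul (carry_lt_two _ _), ih, sum_range_succ, add_comm]

lemma shift2_iterate_add_carryDigits (hℓ : 1 ≤ ℓ) (hv : v ≤ 2 ^ ℓ - 1) (k : ℕ) :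
    (shift2 ℓ)^[k] v + (2 ^ ℓ - 1) * carryDigits ℓ v k = 2 ^ k * v := by
  induction k with
  | zero => simp [carryDigits]
  | succ k ih =>
    have hk := shift2_add_carry hℓ (mapsTo_shift2_Iic.iterate k hv)
    rw [Function.iterate_succ_apply', carryDigits, pow_succ]
    linear_combination hk + 2 * ih

lemma shift2_iterate_period (hℓ : 1 ≤ ℓ) (hv : v ≤ 2 ^ ℓ - 1) : (shift2 ℓ)^[ℓ] v = v := by
  rcases hv.eq_or_lt with rfl | hlt
  · exact Function.iterate_fixed (by rw [shift2, if_pos rfl]) ℓ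
  have hlt' : (shift2 ℓ)^[ℓ] v < 2 ^ ℓ - 1 := mapsTo_shift2_Iio.iterate ℓ hlt
  have key := congrArg (· % (2 ^ ℓ - 1))
    ((shift2_iterate_add_carryDigits hℓ hv ℓ).trans (two_pow_mul_eq_add_mul ℓ v))
  simpa only [Nat.add_mul_mod_self_left, Nat.mod_eq_of_lt hlt', Nat.mod_eq_of_lt hlt] using key

lemma carryDigits_period (hℓ : 1 ≤ ℓ) (hv : v ≤ 2 ^ ℓ - 1) : carryDigits ℓ v ℓ = v := by
  have key := shift2_iterate_add_carryDigits hℓ hv ℓ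
  rw [shift2_iterate_period hℓ hv, two_pow_mul_eq_add_mul] at key
  have : 0 < 2 ^ ℓ - 1 := Nat.sub_pos_of_lt (Nat.one_lt_two_pow (by omega))
  exact Nat.eq_of_mul_eq_mul_left this (by omega)

lemma sum_carry_shift2_iterate (hℓ : 1 ≤ ℓ) (hv : v ≤ 2 ^ ℓ - 1) :
    ∑ i ∈ range ℓ, carry ℓ ((shift2 ℓ)^[i] v) = s2 v := by
  rw [← s2_carryDigits, carryDigits_period hℓ hv]

end shift

lemma Function.Periodic.sum_range_add {M : Type*} [AddCommMonoid M] {f : ℕ → M} {ℓ : ℕ}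
    (hf : Function.Periodic f ℓ) (t : ℕ) : ∑ m ∈ range ℓ, f (t + m) = ∑ m ∈ range ℓ, f m := by
  induction t with
  | zero => simp
  | succ t ih =>
    rw [← ih]
    rcases ℓ with _ | L
    · simp
    rw [sum_range_succ, sum_range_succ', show t + 1 + L = t + (L + 1) by omega, hf, add_zero,
      add_comm]
    simp only [add_assoc, add_comm 1, add_comm (f t)]

lemma sum_range_sum_eq_sum_sum {M : Type*} [AddCommMonoid M] (g : ℕ → M) (l : ℕ → ℕ) (w : ℕ) :
    ∑ m ∈ range (∑ k ∈ range w, l k), g m =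
      ∑ k ∈ range w, ∑ j ∈ range (l k), g (∑ i ∈ range k, l i + j) := by
  induction w with
  | zero => simp
  | succ w ih => rw [sum_range_succ, sum_range_add, ih, sum_range_succ]

def carrySet (D : Finset ℕ) (ℓ : ℕ) (U : ℕ → ℕ) (k : ℕ) : Finset ℕ :=
  D.filter fun d => 2 ^ (ℓ - 1) ≤ (shift2 ℓ)^[k] (U d)

namespace IsSolution

variable {D : Finset ℕ} {ℓ : ℕ} {U : ℕ → ℕ}

lemma two_pow_sub_one_pos (hsol : IsSolution D ℓ U) : 0 < 2 ^ ℓ - 1 :=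
  Nat.sub_pos_of_lt (Nat.one_lt_two_pow (by have := hsol.len_pos; omega))

lemma sum_shift2_iterate_succ_add (hsol : IsSolution D ℓ U) (k : ℕ) :
    ∑ d ∈ D, d * (shift2 ℓ)^[k + 1] (U d) + (2 ^ ℓ - 1) * ∑ d ∈ carrySet D ℓ U k, d =
      2 * ∑ d ∈ D, d * (shift2 ℓ)^[k] (U d) := by
  rw [carrySet, sum_filter, mul_sum, mul_sum, ← sum_add_distrib]
  refine sum_congr rfl fun d _ => ?_
  have hd := shift2_add_carry hsol.len_pos (mapsTo_shift2_Iic.iterate k (hsol.bounded d))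
  rw [Function.iterate_succ_apply']
  unfold carry at hd
  split_ifs at hd ⊢ <;> linear_combination d * hd

lemma dvd_sum_shift2_iterate (hsol : IsSolution D ℓ U) (k : ℕ) :
    2 ^ ℓ - 1 ∣ ∑ d ∈ D, d * (shift2 ℓ)^[k] (U d) := by
  induction k with
  | zero => exact hsol.dvd
  | succ k ih =>
    refine (Nat.dvd_add_left (dvd_mul_right _ (∑ d ∈ carrySet D ℓ U k, d))).mp ?_
    rw [sum_shift2_iterate_succ_add hsol]
    exact ih.mul_left 2

lemma supportMap_succ_add (hsol : IsSolution D ℓ U) (k : ℕ) :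
    supportMap D ℓ U (k + 1) + ∑ d ∈ carrySet D ℓ U k, d = 2 * supportMap D ℓ U k := by
  unfold supportMap
  rw [← Nat.add_mul_div_left _ _ hsol.two_pow_sub_one_pos, sum_shift2_iterate_succ_add hsol,
    Nat.mul_div_assoc _ (hsol.dvd_sum_shift2_iterate k)]

lemma shift2_iterate_add_period (hsol : IsSolution D ℓ U) (k d : ℕ) :
    (shift2 ℓ)^[k + ℓ] (U d) = (shift2 ℓ)^[k] (U d) := by
  rw [Function.iterate_add_apply, shift2_iterate_period hsol.len_pos (hsol.bounded d)]

lemma supportMap_periodic (hsol : IsSolution D ℓ U) : Function.Periodic (supportMap D ℓ U) ℓ :=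
  fun k => by simp only [supportMap, hsol.shift2_iterate_add_period]

lemma carrySet_periodic (hsol : IsSolution D ℓ U) : Function.Periodic (carrySet D ℓ U) ℓ :=
  fun k => by simp only [carrySet, hsol.shift2_iterate_add_period]

lemma sum_card_carrySet (hsol : IsSolution D ℓ U) :
    ∑ k ∈ range ℓ, #(carrySet D ℓ U k) = weight D U := by
  simp only [carrySet, card_filter]
  rw [sum_comm]
  exact sum_congr rfl fun d _ => sum_carry_shift2_iterate hsol.len_pos (hsol.bounded d)

end IsSolution

def runStart (t : ℕ) (lk : ℕ → ℕ) (k : ℕ) : ℕ := t + ∑ i ∈ range k, lk i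

lemma runStart_succ (t : ℕ) (lk : ℕ → ℕ) (k : ℕ) :
    runStart t lk (k + 1) = runStart t lk k + lk k := by
  rw [runStart, runStart, sum_range_succ, add_assoc]

structure IsRunDecomposition (φ : ℕ → ℕ) (w t : ℕ) (nk lk : ℕ → ℕ) : Prop where
  lk_pos : ∀ k < w, 0 < lk k
  apply_runStart_add : ∀ k < w, ∀ j < lk k, φ (runStart t lk k + j) = 2 ^ j * nk k
  jump : ∀ k < w, nk ((k + 1) % w) < 2 ^ lk k * nk k

namespace IsRunDecomposition

variable {φ T : ℕ → ℕ} {w t : ℕ} {nk lk : ℕ → ℕ}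

lemma sum_range_lt_sum_range (hR : IsRunDecomposition φ w t nk lk) {a b : ℕ} (hab : a < b)
    (hb : b ≤ w) : ∑ i ∈ range a, lk i < ∑ i ∈ range b, lk i :=
  sum_lt_sum_of_subset (range_subset_range.2 hab.le) (mem_range.2 hab) (by simp)
    (hR.lk_pos a (by omega)) fun _ _ _ => Nat.zero_le _

lemma apply_runStart (hR : IsRunDecomposition φ w t nk lk) {k : ℕ} (hk : k < w) :
    φ (runStart t lk k) = nk k := by
  simpa using hR.apply_runStart_add k hk 0 (hR.lk_pos k hk)

lemma apply_runStart_succ (hR : IsRunDecomposition φ w t nk lk)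
    (hper : Function.Periodic φ (∑ k ∈ range w, lk k)) {k : ℕ} (hk : k < w) :
    φ (runStart t lk (k + 1)) = nk ((k + 1) % w) := by
  obtain hk' | hk' : k + 1 < w ∨ k + 1 = w := by omega
  · rw [Nat.mod_eq_of_lt hk', hR.apply_runStart hk']
  · rw [hk', Nat.mod_self, runStart, hper, ← hR.apply_runStart (by omega : 0 < w)]
    simp [runStart]

lemma eq_zero_of_succ_lt (hR : IsRunDecomposition φ w t nk lk)
    (hT : ∀ q, φ (q + 1) + T q = 2 * φ q) {k j : ℕ} (hk : k < w) (hj : j + 1 < lk k) :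
    T (runStart t lk k + j) = 0 := by
  have h := hT (runStart t lk k + j)
  rw [add_assoc, hR.apply_runStart_add k hk (j + 1) hj, hR.apply_runStart_add k hk j (by omega),
    pow_succ] at h
  linarith

lemma add_apply_runEnd (hR : IsRunDecomposition φ w t nk lk)
    (hT : ∀ q, φ (q + 1) + T q = 2 * φ q) (hper : Function.Periodic φ (∑ k ∈ range w, lk k))
    {k : ℕ} (hk : k < w) :
    nk ((k + 1) % w) + T (runStart t lk k + (lk k - 1)) = 2 ^ lk k * nk k := by
  have hl := hR.lk_pos k hk
  have h := hT (runStart t lk k + (lk k - 1))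
  rwa [show runStart t lk k + (lk k - 1) + 1 = runStart t lk (k + 1) by rw [runStart_succ]; omega,
    hR.apply_runStart_succ hper hk, hR.apply_runStart_add k hk _ (by omega), ← mul_assoc,
    ← pow_succ', Nat.sub_add_cancel hl] at h

lemma injOn (hR : IsRunDecomposition φ w t nk lk)
    (hper : Function.Periodic φ (∑ k ∈ range w, lk k))
    (hinj : Set.InjOn φ (range (∑ k ∈ range w, lk k))) : Set.InjOn nk (range w) := by
  intro a ha b hb hab
  simp only [coe_range, Set.mem_Iio] at ha hb
  have hlt : ∀ k < w, ∑ i ∈ range k, lk i < ∑ k ∈ range w, lk k :=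
    fun k hk => hR.sum_range_lt_sum_range hk le_rfl
  have hmod : ∀ k < w, φ (runStart t lk k % ∑ k ∈ range w, lk k) = nk k :=
    fun k hk => (hper.map_mod_nat _).trans (hR.apply_runStart hk)
  have h := hinj (by simpa using Nat.mod_lt _ ((Nat.zero_le _).trans_lt (hlt a ha)))
    (by simpa using Nat.mod_lt _ ((Nat.zero_le _).trans_lt (hlt b hb)))
    ((hmod a ha).trans (hab.trans (hmod b hb).symm))
  have h' := Nat.ModEq.add_left_cancel' t h
  rw [Nat.ModEq, Nat.mod_eq_of_lt (hlt a ha), Nat.mod_eq_of_lt (hlt b hb)] at h'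
  by_contra hne
  rcases Nat.lt_or_gt_of_ne hne with hab' | hab'
  · exact (hR.sum_range_lt_sum_range hab' hb.le).ne h'
  · exact (hR.sum_range_lt_sum_range hab' ha.le).ne' h'

end IsRunDecomposition

section runs

variable {D : Finset ℕ} {ℓ w t : ℕ} {U nk lk : ℕ → ℕ}

lemma IsSolution.carrySet_eq_empty_of_succ_lt (hsol : IsSolution D ℓ U) (h0 : 0 ∉ D)
    (hR : IsRunDecomposition (supportMap D ℓ U) w t nk lk) {k j : ℕ} (hk : k < w)
    (hj : j + 1 < lk k) : carrySet D ℓ U (runStart t lk k + j) = ∅ := by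
  have h := sum_eq_zero_iff.1 (hR.eq_zero_of_succ_lt hsol.supportMap_succ_add hk hj)
  exact eq_empty_of_forall_notMem fun d hd => h0 (h d hd ▸ (mem_filter.1 hd).1)

lemma IsSolution.sum_card_carrySet_runEnd (hsol : IsSolution D ℓ U) (h0 : 0 ∉ D)
    (hR : IsRunDecomposition (supportMap D ℓ U) w t nk lk) (hsum : ∑ k ∈ range w, lk k = ℓ)
    (hw : weight D U = w) :
    ∑ k ∈ range w, #(carrySet D ℓ U (runStart t lk k + (lk k - 1))) = w := by
  have hc : Function.Periodic (fun q => #(carrySet D ℓ U q)) ℓ := fun q => by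
    simp only [hsol.carrySet_periodic q]
  calc _ = ∑ k ∈ range w, ∑ j ∈ range (lk k), #(carrySet D ℓ U (runStart t lk k + j)) := by
        refine sum_congr rfl fun k hk => (sum_eq_single_of_mem
          (f := fun j => #(carrySet D ℓ U (runStart t lk k + j))) (lk k - 1) ?_ fun j hj _ => ?_).symm
        · simpa using hR.lk_pos k (mem_range.1 hk)
        · rw [mem_range] at hj
          rw [hsol.carrySet_eq_empty_of_succ_lt h0 hR (mem_range.1 hk) (by omega), card_empty]
    _ = ∑ m ∈ range ℓ, #(carrySet D ℓ U (t + m)) := by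
        rw [← hsum, sum_range_sum_eq_sum_sum]
        simp only [runStart, add_assoc]
    _ = w := (hc.sum_range_add t).trans (hsol.sum_card_carrySet.trans hw)

/-- There are `weight D U = w` carries in a period and each of the `w` jumps needs at least one,
so every jump subtracts exactly one element of `D`. -/
theorem IsSolution.exists_mem_add_eq (hsol : IsSolution D ℓ U) (h0 : 0 ∉ D)
    (hR : IsRunDecomposition (supportMap D ℓ U) w t nk lk) (hsum : ∑ k ∈ range w, lk k = ℓ)
    (hw : weight D U = w) {k : ℕ} (hk : k < w) :
    ∃ d ∈ D, nk ((k + 1) % w) + d = 2 ^ lk k * nk k := by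
  have hT := hsol.supportMap_succ_add
  have hper : Function.Periodic (supportMap D ℓ U) (∑ k ∈ range w, lk k) :=
    hsum ▸ hsol.supportMap_periodic
  have hpos : ∀ k ∈ range w, 1 ≤ #(carrySet D ℓ U (runStart t lk k + (lk k - 1))) :=
    fun k hk => card_pos.2 (nonempty_of_sum_ne_zero (f := fun d => d) (by
      have := hR.add_apply_runEnd hT hper (mem_range.1 hk)
      have := hR.jump k (mem_range.1 hk)
      omega))
  have hone := (sum_eq_sum_iff_of_le hpos).1
    (by rw [hsol.sum_card_carrySet_runEnd h0 hR hsum hw]; simp) k (mem_range.2 hk)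
  obtain ⟨d, hd⟩ := card_eq_one.1 hone.symm
  refine ⟨d, (mem_filter.1 (hd ▸ mem_singleton_self d)).1, ?_⟩
  rw [← hR.add_apply_runEnd hT hper hk, hd, sum_singleton]

end runs

lemma three_mul_card_le_sum_log_add {ι : Type*} (s : Finset ι) (f : ι → ℕ)
    (hinj : Set.InjOn f s) (hodd : ∀ i ∈ s, Odd (f i)) :
    3 * #s ≤ ∑ i ∈ s, Nat.log 2 (f i) + 7 := by
  classical
  have hsmall : ∑ i ∈ s, (3 - Nat.log 2 (f i)) ≤ 7 := by
    rw [← sum_image (f := fun x => 3 - Nat.log 2 x) hinj, ← sum_filter_ne_zero]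
    calc _ ≤ ∑ x ∈ ({1, 3, 5, 7} : Finset ℕ), (3 - Nat.log 2 x) :=
          sum_le_sum_of_subset fun x hx => ?_
      _ = 7 := by decide
    obtain ⟨hx, hne⟩ := mem_filter.1 hx
    obtain ⟨i, hi, rfl⟩ := mem_image.1 hx
    have hlt : f i < 2 ^ 3 :=
      (Nat.lt_pow_succ_log_self one_lt_two _).trans_le (Nat.pow_le_pow_right two_pos (by omega))
    have := Nat.odd_iff.1 (hodd i hi)
    simp only [mem_insert, mem_singleton]
    omega
  calc 3 * #s = ∑ _i ∈ s, 3 := by rw [sum_const, smul_eq_mul, mul_comm]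
    _ ≤ ∑ i ∈ s, (Nat.log 2 (f i) + (3 - Nat.log 2 (f i))) := sum_le_sum fun i _ => by omega
    _ ≤ _ := by rw [sum_add_distrib]; omega

lemma exists_succ_mod_eq {w k : ℕ} (hk : k < w) : ∃ k' < w, (k' + 1) % w = k := by
  rcases k with _ | k
  · exact ⟨w - 1, by omega, by rw [Nat.sub_add_cancel (by omega), Nat.mod_self]⟩
  · exact ⟨k, by omega, Nat.mod_eq_of_lt hk⟩

structure IsOddJumpCycle (n w : ℕ) (nk lk : ℕ → ℕ) : Prop where
  lk_pos : ∀ k < w, 0 < lk k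
  exists_odd_add_eq :
    ∀ k < w, ∃ d, Odd d ∧ d < 2 ^ (n + 1) ∧ nk ((k + 1) % w) + d = 2 ^ lk k * nk k
  injOn : Set.InjOn nk (range w)

namespace IsOddJumpCycle

variable {n w : ℕ} {nk lk : ℕ → ℕ}

lemma two_pow_mul_eq_two_mul (h : IsOddJumpCycle n w nk lk) {k : ℕ} (hk : k < w) :
    2 ^ lk k * nk k = 2 * (2 ^ (lk k - 1) * nk k) := by
  rw [← mul_assoc, ← pow_succ', Nat.sub_add_cancel (h.lk_pos k hk)]

lemma odd (h : IsOddJumpCycle n w nk lk) {k : ℕ} (hk : k < w) : Odd (nk k) := by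
  obtain ⟨k', hk', rfl⟩ := exists_succ_mod_eq hk
  obtain ⟨d, hd, -, he⟩ := h.exists_odd_add_eq k' hk'
  have h2 := h.two_pow_mul_eq_two_mul hk'
  rw [Nat.odd_iff] at hd ⊢
  omega

/-- At the run with the largest maximum `M = 2^(lk k - 1) nk k`, the jump relation reads
`2 M = nk (k + 1) + d ≤ M + d`. -/
lemma pow_pred_mul_lt (h : IsOddJumpCycle n w nk lk) {k : ℕ} (hk : k < w) :
    2 ^ (lk k - 1) * nk k < 2 ^ (n + 1) := by
  obtain ⟨k₀, hk₀, hmax⟩ :=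
    exists_max_image (range w) (fun k => 2 ^ (lk k - 1) * nk k) ⟨k, mem_range.2 hk⟩
  refine (hmax k (mem_range.2 hk)).trans_lt ?_
  have hk₀ := mem_range.1 hk₀
  obtain ⟨d, -, hd, he⟩ := h.exists_odd_add_eq k₀ hk₀
  have hnext := hmax _ (mem_range.2 (Nat.mod_lt (k₀ + 1) (by omega)))
  have hle : nk ((k₀ + 1) % w) ≤ 2 ^ (lk ((k₀ + 1) % w) - 1) * nk ((k₀ + 1) % w) :=
    Nat.le_mul_of_pos_left _ (by positivity)
  have := h.two_pow_mul_eq_two_mul hk₀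
  omega

lemma add_log_le (h : IsOddJumpCycle n w nk lk) {k : ℕ} (hk : k < w) :
    lk k + Nat.log 2 (nk k) ≤ n + 1 := by
  have hpow : 2 ^ (lk k - 1 + Nat.log 2 (nk k)) < 2 ^ (n + 1) := by
    rw [pow_add]
    exact (Nat.mul_le_mul_left _ (Nat.pow_log_le_self 2 (h.odd hk).pos.ne')).trans_lt
      (h.pow_pred_mul_lt hk)
  have := (Nat.pow_lt_pow_iff_right (by norm_num)).1 hpow
  have := h.lk_pos k hk
  omega

lemma sum_log_le (h : IsOddJumpCycle n w nk lk) (hlow : (n - 1) * w ≤ ∑ k ∈ range w, lk k) :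
    ∑ k ∈ range w, Nat.log 2 (nk k) ≤ 14 := by
  have hsum := sum_le_sum fun k hk => h.add_log_le (mem_range.1 hk)
  rw [sum_add_distrib, sum_const, card_range, smul_eq_mul] at hsum
  have hcard := three_mul_card_le_sum_log_add (range w) nk h.injOn
    fun k hk => h.odd (mem_range.1 hk)
  rw [card_range] at hcard
  have : w * (n + 1) ≤ (n - 1) * w + 2 * w := by
    rcases n with _ | n
    · omega
    · rw [Nat.add_sub_cancel]; ring_nf; omega
  omega

/-- A run of length `n + 1 - u` starting above `2^u` would force the next initial term above
`2^(n+1-u)`, so the two logarithms alone would exceed the bound `14` on their sum. -/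
theorem add_le_of_two_pow_lt (h : IsOddJumpCycle n w nk lk)
    (hlow : (n - 1) * w ≤ ∑ k ∈ range w, lk k) (hn : 14 ≤ n) (hw : 2 ≤ w) {k u : ℕ}
    (hk : k < w) (hu : 2 ^ u < nk k) : lk k + u ≤ n := by
  have hlog : u ≤ Nat.log 2 (nk k) := Nat.le_log_of_pow_le one_lt_two hu.le
  have hkl := h.add_log_le hk
  by_contra hcon
  have hlk : lk k = n + 1 - u := by omega
  obtain ⟨d, -, hd, he⟩ := h.exists_odd_add_eq k hk
  have hbig : 2 ^ (n + 1) + 2 ^ (n + 1 - u) ≤ 2 ^ lk k * nk k := by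
    calc 2 ^ (n + 1) + 2 ^ (n + 1 - u) = 2 ^ (n + 1 - u) * (2 ^ u + 1) := by
          rw [mul_add, ← pow_add, Nat.sub_add_cancel (by omega), mul_one]
      _ ≤ 2 ^ lk k * nk k := hlk ▸ Nat.mul_le_mul_left _ hu
  have hlog' : n + 1 - u ≤ Nat.log 2 (nk ((k + 1) % w)) :=
    Nat.le_log_of_pow_le one_lt_two (by omega)
  have hne : (k + 1) % w ≠ k := by
    obtain hk1 | hk1 : k + 1 < w ∨ k + 1 = w := by omega
    · rw [Nat.mod_eq_of_lt hk1]; omega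
    · rw [hk1, Nat.mod_self]; omega
  have hpair : Nat.log 2 (nk k) + Nat.log 2 (nk ((k + 1) % w)) ≤
      ∑ j ∈ range w, Nat.log 2 (nk j) := by
    rw [← sum_pair (f := fun j => Nat.log 2 (nk j)) hne.symm]
    refine sum_le_sum_of_subset fun x hx => ?_
    rcases mem_insert.1 hx with rfl | hx
    · exact mem_range.2 hk
    · exact mem_singleton.1 hx ▸ mem_range.2 (Nat.mod_lt _ (by omega))
  have := h.sum_log_le hlow
  omega

theorem long_run (h : IsOddJumpCycle n w nk lk) (hlow : (n - 1) * w ≤ ∑ k ∈ range w, lk k)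
    (hn : 14 ≤ n) (hw : 2 ≤ w) {i : ℕ} (hi : i < w) (hni : n ≤ lk i) :
    nk i = 1 ∧ (∀ j < w, j ≠ i → lk j ≤ n - 1) ∧
      (∀ j₁ < w, ∀ j₂ < w, lk j₁ = n - 1 → lk j₂ = n - 1 → j₁ = j₂) ∧
      (∀ j < w, lk j = n - 1 → nk j = 3) := by
  have hle := fun k hk u hu => h.add_le_of_two_pow_lt hlow hn hw (k := k) (u := u) hk hu
  have hodd := fun j hj => Nat.odd_iff.1 (h.odd (k := j) hj)
  have hne : ∀ j < w, j ≠ i → nk j ≠ nk i := fun j hj hji he =>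
    hji (h.injOn (mem_range.2 hj) (mem_range.2 hi) he)
  have hi1 : nk i = 1 := by
    by_contra
    have := hodd i hi
    have := hle i hi 1 (by omega)
    omega
  have hthree : ∀ j < w, lk j = n - 1 → nk j = 3 := by
    intro j hj hlj
    have := hne j hj (by rintro rfl; omega)
    have := hodd j hj
    by_contra
    have := hle j hj 2 (by omega)
    omega
  refine ⟨hi1, fun j hj hji => ?_, fun j₁ h₁ j₂ h₂ e₁ e₂ => h.injOn (mem_range.2 h₁)
    (mem_range.2 h₂) ((hthree _ h₁ e₁).trans (hthree _ h₂ e₂).symm), hthree⟩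
  have := hne j hj hji
  have := hodd j hj
  have := hle j hj 1 (by omega)
  omega

end IsOddJumpCycle

lemma mem_oddD {n d : ℕ} : d ∈ oddD n ↔ d ≤ 2 ^ (n + 1) - 3 ∧ d % 2 = 1 := by
  simp [oddD, oddUpTo]

theorem run_lengths_and_initial_terms_general
    (n : ℕ) (hn : 18 ≤ n) (ℓ w : ℕ) (U : ℕ → ℕ)
    (hsol : IsSolution (oddD n) ℓ U)
    (hirr : IrreducibleSol (oddD n) ℓ U)
    (hw : weight (oddD n) U = w) (hw2 : 2 ≤ w)
    (hlow : (n - 1) * w ≤ ℓ)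
    (nk lk : ℕ → ℕ)
    (hlkpos : ∀ k < w, 0 < lk k)
    (hsum : ∑ k ∈ Finset.range w, lk k = ℓ)
    (t : ℕ)
    (hdesc : ∀ k < w, ∀ j < lk k,
      supportMap (oddD n) ℓ U (t + (∑ k' ∈ Finset.range k, lk k') + j) = 2 ^ j * nk k)
    (hjump : ∀ k < w, nk ((k + 1) % w) < 2 ^ lk k * nk k) :
    (∀ k < w, lk k ≤ n + 1) ∧
    (∀ k < w, nk k % 2 = 1) ∧
    (∀ k < w, ∀ u, 1 ≤ u → 2 ^ u < nk k → lk k ≤ n - u) ∧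
    (∀ i < w, n ≤ lk i →
      nk i = 1 ∧ (∀ j < w, j ≠ i → lk j ≤ n - 1) ∧
      (∀ j₁ < w, ∀ j₂ < w, lk j₁ = n - 1 → lk j₂ = n - 1 → j₁ = j₂) ∧
      (∀ j < w, lk j = n - 1 → nk j = 3)) := by
  have hR : IsRunDecomposition (supportMap (oddD n) ℓ U) w t nk lk := ⟨hlkpos, hdesc, hjump⟩
  have hJ : IsOddJumpCycle n w nk lk :=
    { lk_pos := hlkpos
      exists_odd_add_eq := fun k hk => by
        obtain ⟨d, hd, he⟩ := hsol.exists_mem_add_eq (by simp [mem_oddD]) hR hsum hw hk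
        have := mem_oddD.1 hd
        exact ⟨d, Nat.odd_iff.2 this.2, by omega, he⟩
      injOn := hR.injOn (hsum ▸ hsol.supportMap_periodic) (hsum ▸ hirr) }
  have hlow' : (n - 1) * w ≤ ∑ k ∈ range w, lk k := hsum ▸ hlow
  refine ⟨fun k hk => ?_, fun k hk => Nat.odd_iff.1 (hJ.odd hk), fun k hk u _ hu => ?_,
    fun i hi hni => hJ.long_run hlow' (by omega) hw2 hi hni⟩
  · have := hJ.add_log_le hk
    omega
  · have := hJ.add_le_of_two_pow_lt hlow' (by omega) hw2 hk hu
    omega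

/-- For `n ≥ 18`, `D = {i : 1 ≤ i ≤ 2^{n+1} − 3, i odd}`, let `U` be an irreducible
solution of length `ℓ` and weight `w ≥ 2` with density in `[1/n, 1/(n−1)]`, whose
support (up to a cyclic shift by `t` of the argument) is the concatenation of `w`
geometric runs with initial terms `nk 0, …, nk (w−1)` and lengths `lk 0, …, lk (w−1)`,
the jumps happening exactly at the end of each run.  Then: (i) each `lk k ≤ n + 1`;
(ii) each `nk k` is odd; (iii) if `nk k > 2^u` with `u ≥ 1` then `lk k ≤ n − u`;
(iv) if `lk i ≥ n` then `nk i = 1`, all other `lk j ≤ n − 1`, at most one `j` has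
`lk j = n − 1`, and such `j` has `nk j = 3`. -/
theorem run_lengths_and_initial_terms
    (n : ℕ) (hn : 18 ≤ n) (ℓ w : ℕ) (U : ℕ → ℕ)
    (hsol : IsSolution (oddD n) ℓ U)
    (hirr : IrreducibleSol (oddD n) ℓ U)
    (hw : weight (oddD n) U = w) (hw2 : 2 ≤ w)
    (hlow : (n - 1) * w ≤ ℓ) (hhigh : ℓ ≤ n * w)
    (nk lk : ℕ → ℕ)
    (hnkpos : ∀ k < w, 0 < nk k) (hlkpos : ∀ k < w, 0 < lk k)
    (hsum : ∑ k ∈ Finset.range w, lk k = ℓ)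
    (t : ℕ)
    (hdesc : ∀ k < w, ∀ j < lk k,
      supportMap (oddD n) ℓ U (t + (∑ k' ∈ Finset.range k, lk k') + j) = 2 ^ j * nk k)
    (hjump : ∀ k < w, nk ((k + 1) % w) < 2 ^ lk k * nk k) :
    (∀ k < w, lk k ≤ n + 1) ∧
    (∀ k < w, nk k % 2 = 1) ∧
    (∀ k < w, ∀ u, 1 ≤ u → 2 ^ u < nk k → lk k ≤ n - u) ∧
    (∀ i < w, n ≤ lk i →
      nk i = 1 ∧ (∀ j < w, j ≠ i → lk j ≤ n - 1) ∧
      (∀ j₁ < w, ∀ j₂ < w, lk j₁ = n - 1 → lk j₂ = n - 1 → j₁ = j₂) ∧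
      (∀ j < w, lk j = n - 1 → nk j = 3)) :=
  run_lengths_and_initial_terms_general n hn ℓ w U hsol hirr hw hw2 hlow nk lk hlkpos hsum t hdesc
    hjump
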